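/- Let p ≥ 1 and let G = (V,E) be a connected, locally finite simple graph. If (Γ_n)_{n∈ℕ} is a countable collection of families of infinite paths in G such that each Γ_n is p-null, then the union ∪_{n∈ℕ} Γ_n is p-null. -/

import Mathlib

open Filter Topology Metric
open scoped ENNReal Classical

/-- The `p`-Dirichlet energy of `f`: half the sum of `|f u - f v| ^ p` over
ordered pairs of adjacent vertices. -/
noncomputable def dirichletEnergy {V : Type*} (G : SimpleGraph V) (p : ℝ) (f : V → ℝ) : ℝ :=
  (1 / 2) * ∑' q : {q : V × V // G.Adj q.1 q.2}, |f q.1.1 - f q.1.2| ^ p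

/-- `f` is `p`-Dirichlet, i.e. `D_p(f) < ∞`. -/
def DirichletSummable {V : Type*} (G : SimpleGraph V) (p : ℝ) (f : V → ℝ) : Prop :=
  Summable fun q : {q : V × V // G.Adj q.1 q.2} => |f q.1.1 - f q.1.2| ^ p

/-- `G` is `p`-parabolic: for some vertex `v₀`, the infimum of `D_p(f)` over finitely
supported `f` with `f v₀ = 1` equals `0`. -/
def Parabolic {V : Type*} (G : SimpleGraph V) (p : ℝ) : Prop :=
  ∃ v₀ : V, ∀ ε : ℝ, 0 < ε → ∃ f : V → ℝ,
    (Function.support f).Finite ∧ f v₀ = 1 ∧ dirichletEnergy G p f < ε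

/-- The `p`-Laplacian `Δ_p f (v) = Σ_{u ~ v} |f u - f v| ^ (p-2) (f u - f v)`. -/
noncomputable def pLaplacian {V : Type*} (G : SimpleGraph V) (p : ℝ) (f : V → ℝ) (v : V) : ℝ :=
  ∑' u, if G.Adj u v then |f u - f v| ^ (p - 2) * (f u - f v) else 0

/-- `f` is `p`-harmonic: `Δ_p f = 0` everywhere. -/
def IsPHarmonic {V : Type*} (G : SimpleGraph V) (p : ℝ) (f : V → ℝ) : Prop :=
  ∀ v, pLaplacian G p f v = 0

/-- `G` is locally finite. -/
def LocFin {V : Type*} (G : SimpleGraph V) : Prop := ∀ v, (G.neighborSet v).Finite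

/-- `G` has uniformly bounded vertex degrees. -/
def BddDeg {V : Type*} (G : SimpleGraph V) : Prop := ∃ D : ℕ, ∀ v, (G.neighborSet v).ncard ≤ D

/-- A quasi-sphere packing of `G` in `ℝ^d` with constant `C`. -/
def IsQuasiSpherePacking {V : Type*} (G : SimpleGraph V) (d : ℕ) (C : ℝ)
    (P : V → Set (EuclideanSpace ℝ (Fin d))) : Prop :=
  (∀ v, IsCompact (P v)) ∧
  (∃ (z : V → EuclideanSpace ℝ (Fin d)) (r : V → ℝ),
    ∀ v, 0 < r v ∧ closedBall (z v) (r v) ⊆ P v ∧ P v ⊆ closedBall (z v) (C * r v)) ∧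
  (Pairwise fun u v => Disjoint (interior (P u)) (interior (P v))) ∧
  (∀ u v, u ≠ v → ((P u ∩ P v).Nonempty ↔ G.Adj u v))

/-- `G` is quasi-sphere packable in `ℝ^d`. -/
def QuasiSpherePackable {V : Type*} (G : SimpleGraph V) (d : ℕ) : Prop :=
  ∃ C : ℝ, 1 ≤ C ∧ ∃ P : V → Set (EuclideanSpace ℝ (Fin d)), IsQuasiSpherePacking G d C P

/-- The `m`-length of a finite walk: the sum of `m` over its edges. -/
noncomputable def walkLength {V : Type*} {G : SimpleGraph V} (m : Sym2 V → ℝ) {u v : V}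
    (w : G.Walk u v) : ℝ :=
  (w.edges.map m).sum

/-- The distance `d_m(u,v)`: the infimum of `m`-lengths of walks joining `u` and `v`. -/
noncomputable def graphDist {V : Type*} (G : SimpleGraph V) (m : Sym2 V → ℝ) (u v : V) : ℝ :=
  sInf {L : ℝ | ∃ w : G.Walk u v, walkLength m w = L}

/-- `m` is an `L^p` metric on `G`: positive on edges, with `Σ_e m(e)^p < ∞`. -/
def IsLpMetric {V : Type*} (G : SimpleGraph V) (p : ℝ) (m : Sym2 V → ℝ) : Prop :=
  (∀ e ∈ G.edgeSet, 0 < m e) ∧ Summable fun e : G.edgeSet => m (e : Sym2 V) ^ p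

/-- `γ : ℕ → V` is a half-infinite (self-avoiding) path in `G`. -/
def IsInfPath {V : Type*} (G : SimpleGraph V) (γ : ℕ → V) : Prop :=
  (∀ n, G.Adj (γ n) (γ (n + 1))) ∧ Function.Injective γ

/-- The `m`-length of an infinite path. -/
noncomputable def pathLength {V : Type*} (m : Sym2 V → ℝ) (γ : ℕ → V) : ℝ≥0∞ :=
  ∑' n, ENNReal.ofReal (m s(γ n, γ (n + 1)))

/-- A family of infinite paths is `p`-null if some `L^p` metric gives all of them
infinite length. -/
def IsPNull {V : Type*} (G : SimpleGraph V) (p : ℝ) (Γ : Set (ℕ → V)) : Prop :=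
  ∃ m : Sym2 V → ℝ, IsLpMetric G p m ∧ ∀ γ ∈ Γ, pathLength m γ = ⊤

/-- `x` is a `d_m`-Cauchy sequence of vertices. -/
def CauchyIn {V : Type*} (G : SimpleGraph V) (m : Sym2 V → ℝ) (x : ℕ → V) : Prop :=
  ∀ ε : ℝ, 0 < ε → ∃ N, ∀ j ≥ N, ∀ k ≥ N, graphDist G m (x j) (x k) < ε

/-- `x` converges to a vertex of `G` in the metric `d_m`. -/
def ConvergesToVertex {V : Type*} (G : SimpleGraph V) (m : Sym2 V → ℝ) (x : ℕ → V) : Prop :=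
  ∃ v : V, Tendsto (fun n => graphDist G m (x n) v) atTop (𝓝 0)

/-- `m` is a `p`-resolving metric: it is `L^p`, and for every boundary point of the
`d_m`-completion (represented by a Cauchy sequence of vertices not converging to any
vertex), the family of infinite paths converging to that boundary point is `p`-null. -/
def IsResolving {V : Type*} (G : SimpleGraph V) (p : ℝ) (m : Sym2 V → ℝ) : Prop :=
  IsLpMetric G p m ∧
  ∀ x : ℕ → V, CauchyIn G m x → ¬ ConvergesToVertex G m x →
    IsPNull G p
      {γ | IsInfPath G γ ∧ Tendsto (fun n => graphDist G m (γ n) (x n)) atTop (𝓝 0)}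

/-- `G` is `p`-resolvable. -/
def Resolvable {V : Type*} (G : SimpleGraph V) (p : ℝ) : Prop :=
  ∃ m : Sym2 V → ℝ, IsResolving G p m

/-- `|df(e)|` for an unordered edge. -/
noncomputable def edgeAbsDiff {V : Type*} (f : V → ℝ) : Sym2 V → ℝ :=
  Sym2.lift ⟨fun u v => |f u - f v|, fun u v => abs_sub_comm (f u) (f v)⟩

/-- The graph on `ℤ^n`, two lattice points adjacent iff their `ℓ¹` distance is `1`. -/
def latticeGraph (n : ℕ) : SimpleGraph (Fin n → ℤ) where
  Adj x y := (∑ i, |x i - y i|) = 1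
  symm := by
    constructor
    intro x y (h : (∑ i, |x i - y i|) = 1)
    show (∑ i, |y i - x i|) = 1
    rw [← h]
    exact Finset.sum_congr rfl fun i _ => abs_sub_comm _ _
  loopless := by
    constructor
    intro x h
    simp at h

/-- The graph on `ℤ` where `n` is adjacent to `n ± 1`. -/
def zGraph : SimpleGraph ℤ where
  Adj a b := a = b + 1 ∨ b = a + 1
  symm := ⟨fun a b h => h.symm⟩
  loopless := ⟨fun a h => by rcases h with h | h <;> omega⟩


/-!
Rescale the metric witnessing that `Γ n` is `p`-null so that its `p`-energy is at most `2⁻ⁿ`;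
scaling by a positive constant keeps every path of `Γ n` of infinite length. The pointwise
`ℓ^p`-sum `(Σₙ mₙ(e)^p)^{1/p}` of the rescaled metrics then has `p`-energy at most `2` and
dominates each `mₙ` on edges, so it gives every path of `⋃ₙ Γ n` infinite length.
-/

theorem summable_swap_of_nonneg {α β : Type*} {f : α → β → ℝ} (hf : ∀ a b, 0 ≤ f a b)
    (hrow : ∀ a, Summable (f a)) (h : Summable fun a => ∑' b, f a b) :
    (∀ b, Summable fun a => f a b) ∧ Summable fun b => ∑' a, f a b := by
  have hprod : Summable (Function.uncurry f) :=
    (summable_prod_of_nonneg fun q => hf q.1 q.2).2 ⟨hrow, h⟩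
  exact (summable_prod_of_nonneg fun q => hf q.2 q.1).1 hprod.prod_symm

section

variable {V : Type*} {G : SimpleGraph V} {p : ℝ}

theorem pathLength_const_mul {c : ℝ} (hc : 0 ≤ c) (m : Sym2 V → ℝ) (γ : ℕ → V) :
    pathLength (fun e => c * m e) γ = ENNReal.ofReal c * pathLength m γ := by
  rw [pathLength, pathLength, ← ENNReal.tsum_mul_left]
  exact tsum_congr fun k => ENNReal.ofReal_mul hc

theorem pathLength_mono {m m' : Sym2 V → ℝ} {γ : ℕ → V}
    (h : ∀ k, m s(γ k, γ (k + 1)) ≤ m' s(γ k, γ (k + 1))) :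
    pathLength m γ ≤ pathLength m' γ :=
  ENNReal.tsum_le_tsum fun k => ENNReal.ofReal_le_ofReal (h k)

namespace IsLpMetric

variable {m : Sym2 V → ℝ}

theorem nonneg (hm : IsLpMetric G p m) (e : G.edgeSet) : 0 ≤ m e :=
  (hm.1 e e.2).le

theorem const_mul (hm : IsLpMetric G p m) {c : ℝ} (hc : 0 < c) :
    IsLpMetric G p fun e => c * m e :=
  ⟨fun e he => mul_pos hc (hm.1 e he),
    (hm.2.mul_left (c ^ p)).congr fun e => (Real.mul_rpow hc.le (hm.nonneg e)).symm⟩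

end IsLpMetric

theorem IsPNull.exists_energy_le {Γ : Set (ℕ → V)} (hp : 0 < p) (h : IsPNull G p Γ)
    {ε : ℝ} (hε : 0 < ε) :
    ∃ m, IsLpMetric G p m ∧ ∑' e : G.edgeSet, m e ^ p ≤ ε ∧ ∀ γ ∈ Γ, pathLength m γ = ⊤ := by
  obtain ⟨m, hm, hinf⟩ := h
  set S := ∑' e : G.edgeSet, m e ^ p
  have hS : 0 ≤ S := tsum_nonneg fun e => Real.rpow_nonneg (hm.nonneg e) p
  set c := (ε / (S + 1)) ^ p⁻¹
  have hc : 0 < c := by positivity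
  have hcp : c ^ p = ε / (S + 1) := Real.rpow_inv_rpow (by positivity) hp.ne'
  refine ⟨fun e => c * m e, hm.const_mul hc, ?_, fun γ hγ => ?_⟩
  · calc ∑' e : G.edgeSet, (c * m e) ^ p = c ^ p * S := by
          rw [← tsum_mul_left]
          exact tsum_congr fun e => Real.mul_rpow hc.le (hm.nonneg e)
      _ ≤ ε := by
          rw [hcp, div_mul_eq_mul_div, div_le_iff₀ (by positivity)]
          nlinarith
  · rw [pathLength_const_mul hc.le, hinf γ hγ, ENNReal.mul_top (by simpa using hc)]

noncomputable def lpSum (p : ℝ) (m : ℕ → Sym2 V → ℝ) (e : Sym2 V) : ℝ :=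
  (∑' n, m n e ^ p) ^ p⁻¹

section lpSum

variable {m : ℕ → Sym2 V → ℝ} (hm : ∀ n, IsLpMetric G p (m n))
  (hsum : Summable fun n => ∑' e : G.edgeSet, m n e ^ p)
include hm hsum

theorem summable_energy_swap :
    (∀ e : G.edgeSet, Summable fun n => m n e ^ p) ∧
      Summable fun e : G.edgeSet => ∑' n, m n e ^ p :=
  summable_swap_of_nonneg (fun n e => Real.rpow_nonneg ((hm n).nonneg e) p)
    (fun n => (hm n).2) hsum

theorem le_lpSum (hp : 0 < p) {e : Sym2 V} (he : e ∈ G.edgeSet) (N : ℕ) :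
    m N e ≤ lpSum p m e := by
  have hnn : ∀ n, 0 ≤ m n e ^ p := fun n => Real.rpow_nonneg ((hm n).nonneg ⟨e, he⟩) p
  calc m N e = (m N e ^ p) ^ p⁻¹ := (Real.rpow_rpow_inv ((hm N).nonneg ⟨e, he⟩) hp.ne').symm
    _ ≤ lpSum p m e :=
        Real.rpow_le_rpow (hnn N)
          (((summable_energy_swap hm hsum).1 ⟨e, he⟩).le_tsum N fun n _ => hnn n)
          (inv_nonneg.2 hp.le)

theorem isLpMetric_lpSum (hp : 0 < p) : IsLpMetric G p (lpSum p m) :=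
  ⟨fun e he => ((hm 0).1 e he).trans_le (le_lpSum hm hsum hp he 0),
    (summable_energy_swap hm hsum).2.congr fun e =>
      (Real.rpow_inv_rpow (tsum_nonneg fun n => Real.rpow_nonneg ((hm n).nonneg e) p)
        hp.ne').symm⟩

end lpSum

end

theorem pnull_countable_union_general {V : Type*} (p : ℝ) (hp : 1 ≤ p) (G : SimpleGraph V)
    (Γ : ℕ → Set (ℕ → V))
    (hpath : ∀ n, ∀ γ ∈ Γ n, IsInfPath G γ)
    (hnull : ∀ n, IsPNull G p (Γ n)) :
    IsPNull G p (⋃ n, Γ n) := by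
  have hp0 : 0 < p := by linarith
  choose m hm hsmall hinf using fun n =>
    (hnull n).exists_energy_le hp0 (ε := (1 / 2 : ℝ) ^ n) (by positivity)
  have hsum : Summable fun n => ∑' e : G.edgeSet, m n e ^ p :=
    summable_geometric_two.of_nonneg_of_le
      (fun n => tsum_nonneg fun e => Real.rpow_nonneg ((hm n).nonneg e) p) hsmall
  refine ⟨lpSum p m, isLpMetric_lpSum hm hsum hp0, fun γ hγ => ?_⟩
  obtain ⟨N, hγN⟩ := Set.mem_iUnion.mp hγ
  rw [← top_le_iff, ← hinf N γ hγN]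
  exact pathLength_mono fun k => le_lpSum hm hsum hp0 ((hpath N γ hγN).1 k) N

/-- a countable union of `p`-null families of infinite paths is `p`-null. -/
theorem pnull_countable_union {V : Type*} (p : ℝ) (hp : 1 ≤ p) (G : SimpleGraph V)
    (hconn : G.Connected) (hlf : LocFin G) (Γ : ℕ → Set (ℕ → V))
    (hpath : ∀ n, ∀ γ ∈ Γ n, IsInfPath G γ)
    (hnull : ∀ n, IsPNull G p (Γ n)) :
    IsPNull G p (⋃ n, Γ n) :=
  pnull_countable_union_general p hp G Γ hpath hnull
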